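/- Let r > 0, δ > 0, σ > 0, K > 0, with β₁ > 1 the larger root of (σ²/2)γ(γ−1) + (r−δ)γ − r = 0, and h* = β₁K/(β₁−1). Define V(x) = (h*/β₁)(x/h*)^{β₁} for 0 < x ≤ h* and V(x) = x − K for x ≥ h*. Then V is continuously differentiable, convex, nondecreasing on (0, ∞), and V(x) ≥ (x − K)⁺ for all x > 0, with strict inequality for 0 < x < h*. -/

import Mathlib

/-!
Below `h = h*` the value function is `W y = (h/β)(y/h)^β`, with derivative `(y/h)^(β-1)`,
equal to `1` at `y = h`; and `h/β = h - K` gives `W h = h - K`. So `V` is glued `C¹` at `h`,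
with derivative `min ((y/h)^(β-1)) 1`, which is continuous, nonnegative and nondecreasing:
hence convexity and monotonicity. The line `y ↦ y - K` is the tangent of `W` at `h`, so
Bernoulli's inequality for `(y/h)^β` puts `W` strictly above it away from `h`.
-/

open Set Filter Topology

section Gluing

variable {E : Type*} [NormedAddCommGroup E] [NormedSpace ℝ E]

theorem HasDerivAt.ite_le {f g : ℝ → E} {e : E} {a : ℝ} (hf : HasDerivAt f e a)
    (hg : HasDerivAt g e a) (hfg : f a = g a) :
    HasDerivAt (fun x => if x ≤ a then f x else g x) e a := by
  have hleft : HasDerivWithinAt (fun x => if x ≤ a then f x else g x) e (Iic a) a :=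
    hf.hasDerivWithinAt.congr (fun x hx => if_pos hx) (if_pos le_rfl)
  have hright : HasDerivWithinAt (fun x => if x ≤ a then f x else g x) e (Ici a) a := by
    refine hg.hasDerivWithinAt.congr (fun x hx => ?_) (by rw [if_pos le_rfl, hfg])
    rcases (mem_Ici.mp hx).eq_or_lt with rfl | hlt
    · rw [if_pos le_rfl, hfg]
    · exact if_neg hlt.not_ge
  simpa only [Iic_union_Ici, hasDerivWithinAt_univ] using hleft.union hright

end Gluing

section Calculus

variable {f f' : ℝ → ℝ} {s : Set ℝ}

theorem contDiffOn_one_of_hasDerivAt (hs : IsOpen s) (hf : ∀ x ∈ s, HasDerivAt f (f' x) x)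
    (hf' : ContinuousOn f' s) : ContDiffOn ℝ 1 f s :=
  (contDiffOn_succ_iff_deriv_of_isOpen (n := 0) hs).mpr
    ⟨fun x hx => (hf x hx).differentiableAt.differentiableWithinAt, by simp,
      contDiffOn_zero.mpr (hf'.congr fun x hx => (hf x hx).deriv)⟩

theorem convexOn_of_hasDerivAt_of_monotoneOn (hs : Convex ℝ s) (hso : IsOpen s)
    (hf : ∀ x ∈ s, HasDerivAt f (f' x) x) (hf' : MonotoneOn f' s) : ConvexOn ℝ s f := by
  have hdiff : DifferentiableOn ℝ f s := fun x hx =>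
    (hf x hx).differentiableAt.differentiableWithinAt
  refine MonotoneOn.convexOn_of_deriv hs hdiff.continuousOn ?_ ?_ <;> rw [hso.interior_eq]
  · exact hdiff
  · exact hf'.congr fun x hx => ((hf x hx).deriv).symm

theorem monotoneOn_of_hasDerivAt_nonneg (hs : Convex ℝ s)
    (hf : ∀ x ∈ s, HasDerivAt f (f' x) x) (hf' : ∀ x ∈ s, 0 ≤ f' x) : MonotoneOn f s :=
  monotoneOn_of_hasDerivWithinAt_nonneg hs
    (fun x hx => (hf x hx).continuousAt.continuousWithinAt)
    (fun x hx => (hf x (interior_subset hx)).hasDerivWithinAt)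
    (fun x hx => hf' x (interior_subset hx))

end Calculus

section PowerPiece

variable {h β x : ℝ}

theorem hasDerivAt_div_mul_div_rpow (hh : h ≠ 0) (hβ : β ≠ 0) (hx : x ≠ 0) :
    HasDerivAt (fun y => h / β * (y / h) ^ β) ((x / h) ^ (β - 1)) x := by
  have hpow := (Real.hasDerivAt_rpow_const (p := β) (Or.inl (div_ne_zero hx hh))).comp x
    ((hasDerivAt_id x).div_const h)
  exact (hpow.const_mul (h / β)).congr_deriv (by field_simp)

/-- Bernoulli's inequality: `y ↦ h/β + (y - h)` is the tangent of `y ↦ (h/β)(y/h)^β`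
at `h`. -/
theorem div_add_sub_lt_div_mul_div_rpow (hh : 0 < h) (hβ : 1 < β) (hx : 0 ≤ x) (hxh : x ≠ h) :
    h / β + (x - h) < h / β * (x / h) ^ β := by
  have hbern := one_add_mul_self_lt_rpow_one_add (s := x / h - 1)
    (by linarith [div_nonneg hx hh.le]) (by rwa [sub_ne_zero, Ne, div_eq_one_iff_eq hh.ne']) hβ
  rw [add_sub_cancel] at hbern
  have hscale : h / β + (x - h) = h / β * (1 + β * (x / h - 1)) := by field_simp
  rw [hscale]
  exact mul_lt_mul_of_pos_left hbern (div_pos hh (by linarith))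

end PowerPiece

noncomputable section

namespace PerpetualCall

variable (β K : ℝ)

def boundary : ℝ := β * K / (β - 1)

def value (x : ℝ) : ℝ :=
  if x ≤ boundary β K then boundary β K / β * (x / boundary β K) ^ β else x - K

def delta (x : ℝ) : ℝ := min ((x / boundary β K) ^ (β - 1)) 1

variable {β K}

theorem boundary_div (hβ : 1 < β) : boundary β K / β = boundary β K - K := by
  rw [boundary]
  field_simp [show β - 1 ≠ 0 by linarith]
  ring

section

variable (hβ : 1 < β) (hK : 0 < K)
include hβ hK

theorem boundary_pos : 0 < boundary β K :=
  div_pos (mul_pos (by linarith) hK) (by linarith)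

theorem lt_boundary : K < boundary β K := by
  rw [boundary, lt_div_iff₀ (by linarith)]
  nlinarith

theorem value_boundary : value β K (boundary β K) = boundary β K - K := by
  rw [value, if_pos le_rfl, div_self (boundary_pos hβ hK).ne', Real.one_rpow, mul_one,
    boundary_div hβ]

theorem hasDerivAt_value {x : ℝ} (hx : 0 < x) : HasDerivAt (value β K) (delta β K x) x := by
  have hh := boundary_pos hβ hK
  have hW := hasDerivAt_div_mul_div_rpow hh.ne' (by linarith : β ≠ 0) hx.ne'
  rcases lt_trichotomy x (boundary β K) with hlt | rfl | hgt
  · have : delta β K x = (x / boundary β K) ^ (β - 1) :=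
      min_eq_left (Real.rpow_le_one (by positivity) ((div_le_one hh).mpr hlt.le) (by linarith))
    rw [this]
    refine hW.congr_of_eventuallyEq ?_
    filter_upwards [Iio_mem_nhds hlt] with y hy using if_pos hy.le
  · rw [show delta β K (boundary β K) = 1 by simp [delta, div_self hh.ne']]
    rw [div_self hh.ne', Real.one_rpow] at hW
    refine hW.ite_le ((hasDerivAt_id _).sub_const K) ?_
    simpa [value, div_self hh.ne'] using value_boundary hβ hK
  · have : delta β K x = 1 :=
      min_eq_right (Real.one_le_rpow ((one_le_div hh).mpr hgt.le) (by linarith))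
    rw [this]
    refine ((hasDerivAt_id x).sub_const K).congr_of_eventuallyEq ?_
    filter_upwards [Ioi_mem_nhds hgt] with y hy using if_neg (not_le.mpr hy)

theorem continuousOn_delta : ContinuousOn (delta β K) (Ioi 0) :=
  ContinuousOn.inf ((continuousOn_id.div_const _).rpow_const fun _ hx =>
    Or.inl (div_pos hx (boundary_pos hβ hK)).ne') continuousOn_const

theorem monotoneOn_delta : MonotoneOn (delta β K) (Ioi 0) := fun x hx y _ hxy =>
  min_le_min_right 1 <| Real.rpow_le_rpow (div_nonneg (le_of_lt hx) (boundary_pos hβ hK).le)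
    (div_le_div_of_nonneg_right hxy (boundary_pos hβ hK).le) (by linarith)

theorem delta_nonneg {x : ℝ} (hx : 0 ≤ x) : 0 ≤ delta β K x :=
  le_min (Real.rpow_nonneg (div_nonneg hx (boundary_pos hβ hK).le) _) zero_le_one

theorem sub_lt_value {x : ℝ} (hx : 0 ≤ x) (hxh : x < boundary β K) : x - K < value β K x := by
  have := div_add_sub_lt_div_mul_div_rpow (boundary_pos hβ hK) hβ hx hxh.ne
  rw [boundary_div hβ] at this
  rw [value, if_pos hxh.le, boundary_div hβ]
  linarith

theorem sub_le_value {x : ℝ} (hx : 0 ≤ x) : x - K ≤ value β K x := by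
  rcases lt_trichotomy x (boundary β K) with hlt | rfl | hgt
  · exact (sub_lt_value hβ hK hx hlt).le
  · exact (value_boundary hβ hK).ge
  · exact (if_neg (not_le.mpr hgt)).ge

theorem value_pos {x : ℝ} (hx : 0 < x) : 0 < value β K x := by
  have hh := boundary_pos hβ hK
  unfold value
  split_ifs with hxh
  · have := Real.rpow_pos_of_pos (div_pos hx hh) β
    exact mul_pos (div_pos hh (by linarith)) this
  · linarith [lt_boundary hβ hK]

end

end PerpetualCall

end

open PerpetualCall

theorem stmt_13_general (K β1 : ℝ) (hK : 0 < K) (hβ1 : 1 < β1) :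
    let h : ℝ := β1 * K / (β1 - 1)
    let V : ℝ → ℝ := fun x => if x ≤ h then (h / β1) * (x / h) ^ β1 else x - K
    ContDiffOn ℝ 1 V (Set.Ioi 0) ∧ ConvexOn ℝ (Set.Ioi 0) V ∧
    MonotoneOn V (Set.Ioi 0) ∧
    (∀ x : ℝ, 0 < x → V x ≥ max (x - K) 0) ∧
    (∀ x : ℝ, 0 < x → x < h → V x > max (x - K) 0) := by
  intro h V
  have hV : ∀ x ∈ Ioi (0 : ℝ), HasDerivAt V (delta β1 K x) x := fun x hx =>
    hasDerivAt_value hβ1 hK hx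
  exact ⟨contDiffOn_one_of_hasDerivAt isOpen_Ioi hV (continuousOn_delta hβ1 hK),
    convexOn_of_hasDerivAt_of_monotoneOn (convex_Ioi 0) isOpen_Ioi hV (monotoneOn_delta hβ1 hK),
    monotoneOn_of_hasDerivAt_nonneg (convex_Ioi 0) hV fun _ hx => delta_nonneg hβ1 hK hx.le,
    fun x hx => max_le (sub_le_value hβ1 hK hx.le) (value_pos hβ1 hK hx).le,
    fun x hx hxh => max_lt (sub_lt_value hβ1 hK hx.le hxh) (value_pos hβ1 hK hx)⟩

/-- The glued perpetual American call value function is C¹ on `(0,∞)`, convex,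
nondecreasing, dominates the payoff `(x − K)⁺`, strictly so on `(0, h*)`. -/
theorem stmt_13 (r δ σ K β1 : ℝ) (hr : 0 < r) (hδ : 0 < δ) (hσ : 0 < σ) (hK : 0 < K)
    (hroot : σ^2/2 * β1 * (β1 - 1) + (r - δ) * β1 - r = 0) (hβ1 : 1 < β1) :
    let h : ℝ := β1 * K / (β1 - 1)
    let V : ℝ → ℝ := fun x => if x ≤ h then (h / β1) * (x / h) ^ β1 else x - K
    ContDiffOn ℝ 1 V (Set.Ioi 0) ∧ ConvexOn ℝ (Set.Ioi 0) V ∧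
    MonotoneOn V (Set.Ioi 0) ∧
    (∀ x : ℝ, 0 < x → V x ≥ max (x - K) 0) ∧
    (∀ x : ℝ, 0 < x → x < h → V x > max (x - K) 0) :=
  stmt_13_general K β1 hK hβ1
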